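/- Fix a prime p, an element u ∈ ℤ_p with u − 1 ∈ pℤ_p, and a formal power series H = ∑_{k≥0} a_k X^k with a_k ∈ ℤ_p, and let g : ℕ → ℤ_p be the associated Iwasawa function g(n) = ∑_{k≥0} a_k (u^n − 1)^k. Then for all integers i, n ≥ 0, the i-th iterated forward difference satisfies (Δ^i g)(n) ∈ p^i ℤ_p. -/

import Mathlib

/-! Each term `a_k (u^n - 1)^k` is a polynomial in `u^n`, hence a combination of geometric
sequences `n ↦ (u^j)^n`. Since `Δ (v^n) = (v - 1) v^n` and `u^j ≡ 1 mod p`, the `i`-th difference of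
each term lies in `p^i ℤ_p`. Being a finite combination of shifts, `Δ^i` passes through the series
defining `g`, and `p^i ℤ_p` is closed. -/

open Polynomial

section fwdDiff

variable {R : Type*} [CommRing R]

lemma fwdDiff_iter_pow (v : R) (i n : ℕ) :
    (fwdDiff 1)^[i] (v ^ · : ℕ → R) n = (v - 1) ^ i * v ^ n := by
  simpa using fwdDiff_addChar_eq ⟨(v ^ ·), pow_zero v, pow_add v⟩ n 1 i

lemma fwdDiff_iter_eval_pow_mem_pow {I : Ideal R} {u : R} (hu : u - 1 ∈ I) (P : R[X]) (i n : ℕ) :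
    (fwdDiff 1)^[i] (fun m : ℕ => P.eval (u ^ m)) n ∈ I ^ i := by
  induction P using Polynomial.induction_on' with
  | add P Q hP hQ =>
    have hsplit : (fun m : ℕ => (P + Q).eval (u ^ m))
        = (fun m : ℕ => P.eval (u ^ m)) + fun m : ℕ => Q.eval (u ^ m) := by
      funext m; simp
    rw [hsplit, fwdDiff_iter_add]
    exact Ideal.add_mem _ hP hQ
  | monomial j c =>
    have hgeom : (fun m : ℕ => (monomial j c).eval (u ^ m)) = c • ((u ^ j) ^ · : ℕ → R) := by
      funext m; simp [← pow_mul, mul_comm j m]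
    rw [hgeom, fwdDiff_iter_const_smul, Pi.smul_apply, fwdDiff_iter_pow, smul_eq_mul]
    have hj : u ^ j - 1 ∈ I := I.mem_of_dvd (by simpa using sub_dvd_pow_sub_pow u 1 j) hu
    exact Ideal.mul_mem_left _ _ (Ideal.mul_mem_right _ _ (Ideal.pow_mem_pow hj i))

end fwdDiff

lemma fwdDiff_iter_tsum {G : Type*} [AddCommGroup G] [TopologicalSpace G] [IsTopologicalAddGroup G]
    [T2Space G] (F : ℕ → ℕ → G) (hF : ∀ m, Summable fun k => F k m) (i n : ℕ) :
    (fwdDiff 1)^[i] (fun m => ∑' k, F k m) n = ∑' k, (fwdDiff 1)^[i] (F k) n := by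
  simp only [fwdDiff_iter_eq_sum_shift]
  rw [Summable.tsum_finsetSum fun j _ => (hF _).const_smul _]
  exact Finset.sum_congr rfl fun j _ => ((hF _).tsum_const_smul _).symm

namespace PadicInt

variable {p : ℕ} [Fact p.Prime]

lemma summable_mul_pow (a : ℕ → ℤ_[p]) {x : ℤ_[p]} (hx : ‖x‖ < 1) :
    Summable fun k => a k * x ^ k :=
  .of_norm_bounded (summable_geometric_of_lt_one (norm_nonneg x) hx) fun k => by
    simpa [norm_pow] using mul_le_of_le_one_left (by positivity) (a k).norm_le_one

lemma isClosed_span_p_pow (i : ℕ) :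
    IsClosed ((Ideal.span {(p : ℤ_[p])} ^ i : Ideal ℤ_[p]) : Set ℤ_[p]) := by
  have hball : ((Ideal.span {(p : ℤ_[p])} ^ i : Ideal ℤ_[p]) : Set ℤ_[p])
      = Metric.closedBall 0 ((p : ℝ) ^ (-(i : ℤ))) := by
    ext x
    simp [Ideal.span_singleton_pow, ← norm_le_pow_iff_mem_span_pow]
  exact hball ▸ Metric.isClosed_closedBall

end PadicInt

theorem fwdDiff_iterate_iwasawaFn_mem_pow_general
    (p : ℕ) [Fact p.Prime] (u : ℤ_[p]) (hu : u - 1 ∈ Ideal.span {(p : ℤ_[p])})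
    (a : ℕ → ℤ_[p])
    (g : ℕ → ℤ_[p]) (hgdef : ∀ n : ℕ, g n = ∑' k : ℕ, a k * (u ^ n - 1) ^ k) :
    ∀ i n : ℕ, (fwdDiff 1)^[i] g n ∈ Ideal.span {(p : ℤ_[p])} ^ i := by
  intro i n
  have hsmall (m : ℕ) : ‖u ^ m - 1‖ < 1 := by
    rw [PadicInt.norm_lt_one_iff_dvd]
    exact (Ideal.mem_span_singleton.mp hu).trans (by simpa using sub_dvd_pow_sub_pow u 1 m)
  have hterm (k m : ℕ) : a k * (u ^ m - 1) ^ k = (C (a k) * (X - 1) ^ k).eval (u ^ m) := by simp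
  rw [funext hgdef, fwdDiff_iter_tsum _ (fun m => PadicInt.summable_mul_pow a (hsmall m))]
  refine tsum_mem (PadicInt.isClosed_span_p_pow i) fun k => ?_
  simp only [hterm]
  exact fwdDiff_iter_eval_pow_mem_pow hu _ i n

/-- **Iterated differences of a one-variable Iwasawa function.**
Fix a prime `p`, `u ∈ ℤ_p` with `u − 1 ∈ pℤ_p`, and `H = ∑_k a_k X^k ∈ ℤ_p[[X]]`, and let
`g : ℕ → ℤ_p` be the associated Iwasawa function `g(n) = ∑_k a_k (u^n − 1)^k`.  Then for all
`i, n ≥ 0` the `i`-th iterated forward difference satisfies `(Δ^i g)(n) ∈ p^i ℤ_p`. -/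
theorem fwdDiff_iterate_iwasawaFn_mem_pow
    (p : ℕ) [Fact p.Prime] (u : ℤ_[p]) (hu : u - 1 ∈ Ideal.span {(p : ℤ_[p])})
    (H : PowerSeries ℤ_[p])
    (a : ℕ → ℤ_[p]) (ha : ∀ k, a k = PowerSeries.coeff k H)
    (g : ℕ → ℤ_[p]) (hgdef : ∀ n : ℕ, g n = ∑' k : ℕ, a k * (u ^ n - 1) ^ k) :
    ∀ i n : ℕ, (fwdDiff 1)^[i] g n ∈ Ideal.span {(p : ℤ_[p])} ^ i :=
  fwdDiff_iterate_iwasawaFn_mem_pow_general p u hu a g hgdef
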